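/- With φ and V as above, V(·,s) → 0 in L²_ρ(ℝ^N) as s → +∞, where ρ(y) = (4π)^(-N/2) e^(-|y|²/4); in fact |V(y,s)| ≤ C(1+|y|²)/s for s ≥ 1 and some constant C depending only on p and N. -/

import Mathlib

/-!
Write `q = p - 1`, so that `κ ^ q = 1 / q` and `V = p (φ ^ q - κ ^ q)`. The first summand of `φ`
lies below `κ` and its `q`-th power is `1 / (q + (q² / 4p) |y|² / s)`, which is below `1 / q` by
at most `|y|² / (4ps)`. The second summand is `O(1 / s)` and moves `φ ^ q` up by at most a
Lipschitz constant of `t ↦ t ^ q` on a compact subinterval of `(0, ∞)` times `O(1 / s)`. Hence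
`|V| ≤ C (1 + |y|²) / s`, and since `(1 + |y|²)² ρ` is integrable, `∫ V² ρ = O(1 / s²)`.
-/

open Real Set Filter MeasureTheory Topology

lemma abs_rpow_sub_rpow_le_of_mem_Icc {r m M x y : ℝ} (hm : 0 < m) (hx : x ∈ Icc m M)
    (hy : y ∈ Icc m M) :
    |x ^ r - y ^ r| ≤ |r| * max (m ^ (r - 1)) (M ^ (r - 1)) * |x - y| := by
  have hderiv : ∀ t ∈ Icc m M,
      HasDerivWithinAt (fun t : ℝ => t ^ r) (r * t ^ (r - 1)) (Icc m M) t := fun t ht =>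
    (hasDerivAt_rpow_const (Or.inl (hm.trans_le ht.1).ne')).hasDerivWithinAt
  have hbound : ∀ t ∈ Icc m M, ‖r * t ^ (r - 1)‖ ≤ |r| * max (m ^ (r - 1)) (M ^ (r - 1)) := by
    intro t ht
    have ht0 : 0 < t := hm.trans_le ht.1
    rw [norm_mul, norm_eq_abs, norm_eq_abs, abs_of_nonneg (rpow_nonneg ht0.le _)]
    gcongr
    rcases le_or_gt 0 (r - 1) with h | h
    · exact le_max_of_le_right (rpow_le_rpow ht0.le ht.2 h)
    · exact le_max_of_le_left (rpow_le_rpow_of_nonpos hm ht.1 h.le)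
  simpa only [norm_eq_abs] using
    (convex_Icc m M).norm_image_sub_le_of_norm_hasDerivWithin_le hderiv hbound hy hx

lemma rpow_neg_one_div_rpow_self {x q : ℝ} (hx : 0 ≤ x) (hq : q ≠ 0) :
    (x ^ (-1 / q)) ^ q = 1 / x := by
  rw [← rpow_mul hx, div_mul_cancel₀ _ hq, rpow_neg_one, one_div]

lemma one_div_sub_one_div_add_le {q t : ℝ} (hq : 0 < q) (ht : 0 ≤ t) :
    1 / q - 1 / (q + t) ≤ t / q ^ 2 := by
  rw [div_sub_div _ _ hq.ne' (by positivity), one_mul, mul_one, add_sub_cancel_left, sq]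
  gcongr
  linarith

lemma abs_rpow_profile_sub_le {q a B : ℝ} (hq : 0 < q) (ha : 0 ≤ a) (hB : 0 ≤ B) :
    ∃ C > 0, ∀ s ≥ (1 : ℝ), ∀ w ≥ (0 : ℝ),
      |((q + a * w / s) ^ (-1 / q) + B / s) ^ q - 1 / q| ≤ C * (1 + w) / s := by
  set κ := q ^ (-1 / q)
  set L := q * max (κ ^ (q - 1)) ((κ + B) ^ (q - 1))
  have hκ : 0 < κ := rpow_pos_of_pos hq _
  have hL : 0 ≤ L := mul_nonneg hq.le ((rpow_nonneg hκ.le _).trans (le_max_left _ _))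
  refine ⟨a / q ^ 2 + L * B + 1, by positivity, fun s hs w hw => ?_⟩
  have hs0 : 0 < s := by linarith
  set A := (q + a * w / s) ^ (-1 / q)
  have hA : 0 < A := rpow_pos_of_pos (by positivity) _
  have hAκ : A ≤ κ :=
    rpow_le_rpow_of_nonpos hq (by simp only [le_add_iff_nonneg_right]; positivity)
      (div_nonpos_of_nonpos_of_nonneg (by norm_num) hq.le)
  have hBs : 0 ≤ B / s := by positivity
  have lower : 1 / q - a / q ^ 2 * (w / s) ≤ (A + B / s) ^ q :=
    calc 1 / q - a / q ^ 2 * (w / s) ≤ 1 / (q + a * w / s) := by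
          have := one_div_sub_one_div_add_le hq (t := a * w / s) (by positivity)
          linarith [show a * w / s / q ^ 2 = a / q ^ 2 * (w / s) by ring]
      _ = A ^ q := (rpow_neg_one_div_rpow_self (by positivity) hq.ne').symm
      _ ≤ (A + B / s) ^ q := rpow_le_rpow hA.le (by linarith) hq.le
  have upper : (A + B / s) ^ q ≤ 1 / q + L * (B / s) :=
    calc (A + B / s) ^ q ≤ (κ + B / s) ^ q := rpow_le_rpow (by positivity) (by linarith) hq.le
      _ ≤ κ ^ q + L * (B / s) := by
          have hBsB : B / s ≤ B := div_le_self hB hs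
          have := abs_rpow_sub_rpow_le_of_mem_Icc (r := q) (M := κ + B) hκ
            (x := κ + B / s) (y := κ) ⟨by linarith, by linarith⟩ ⟨le_rfl, by linarith⟩
          rw [abs_of_pos hq, add_sub_cancel_left, abs_of_nonneg hBs] at this
          linarith [le_abs_self ((κ + B / s) ^ q - κ ^ q)]
      _ = 1 / q + L * (B / s) := by rw [rpow_neg_one_div_rpow_self hq.le hq.ne']
  have hsum : a / q ^ 2 * (w / s) + L * (B / s) ≤ (a / q ^ 2 + L * B + 1) * (1 + w) / s := by
    rw [← mul_div_assoc, ← mul_div_assoc, ← add_div]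
    gcongr
    nlinarith [mul_nonneg (mul_nonneg hL hB) hw, div_nonneg ha (sq_nonneg q)]
  have hw' : 0 ≤ a / q ^ 2 * (w / s) := by positivity
  have hB' : 0 ≤ L * (B / s) := mul_nonneg hL hBs
  rw [abs_le]
  constructor <;> linarith

section Gaussian

variable {E : Type*} [NormedAddCommGroup E] [InnerProductSpace ℝ E] [FiniteDimensional ℝ E]
  [MeasurableSpace E] [BorelSpace E]

lemma integrable_exp_neg_mul_sq_norm {b : ℝ} (hb : 0 < b) :
    Integrable (fun v : E => exp (-b * ‖v‖ ^ 2)) := by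
  refine (GaussianFourier.integrable_cexp_neg_mul_sq_norm_add (b := b) (by simpa) 0
    (0 : E)).norm.congr (ae_of_all _ fun v => ?_)
  simp only [zero_mul, add_zero]
  norm_cast
  exact norm_of_nonneg (exp_pos _).le

lemma one_add_sq_mul_exp_neg_div_four_le {t : ℝ} (ht : 0 ≤ t) :
    (1 + t) ^ 2 * exp (-t / 4) ≤ 256 * exp (-(1 / 8) * t) := by
  have hlin : 1 + t ≤ 16 * exp (t / 16) := by linarith [add_one_le_exp (t / 16)]
  calc (1 + t) ^ 2 * exp (-t / 4) ≤ (16 * exp (t / 16)) ^ 2 * exp (-t / 4) := by gcongr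
    _ = 256 * exp (-(1 / 8) * t) := by
        rw [mul_pow, ← exp_nat_mul, mul_assoc, ← exp_add]
        norm_num
        ring_nf

lemma integrable_one_add_sq_norm_sq_mul_exp :
    Integrable (fun v : E => (1 + ‖v‖ ^ 2) ^ 2 * exp (-‖v‖ ^ 2 / 4)) := by
  refine ((integrable_exp_neg_mul_sq_norm (E := E) (b := 1 / 8) (by norm_num)).const_mul
    256).mono' (by fun_prop) (ae_of_all _ fun v => ?_)
  rw [norm_of_nonneg (by positivity)]
  exact one_add_sq_mul_exp_neg_div_four_le (by positivity)

end Gaussian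

lemma tendsto_integral_sq_mul_of_abs_le_div {X : Type*} [MeasurableSpace X] {μ : Measure X}
    {F : X → ℝ → ℝ} {g ρ : X → ℝ} (hρ : ∀ y, 0 ≤ ρ y)
    (hg : Integrable (fun y => g y ^ 2 * ρ y) μ) (hF : ∀ s ≥ (1 : ℝ), ∀ y, |F y s| ≤ g y / s) :
    Tendsto (fun s => ∫ y, F y s ^ 2 * ρ y ∂μ) atTop (𝓝 0) := by
  have hlim : Tendsto (fun s : ℝ => (s ^ 2)⁻¹ * ∫ y, g y ^ 2 * ρ y ∂μ) atTop (𝓝 0) := by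
    simpa using ((tendsto_pow_atTop two_ne_zero).inv_tendsto_atTop).mul_const
      (∫ y, g y ^ 2 * ρ y ∂μ)
  refine tendsto_of_tendsto_of_tendsto_of_le_of_le' tendsto_const_nhds hlim
    (Eventually.of_forall fun s => integral_nonneg fun y => mul_nonneg (sq_nonneg _) (hρ y)) ?_
  filter_upwards [eventually_ge_atTop (1 : ℝ)] with s hs
  rw [← integral_const_mul]
  refine integral_mono_of_nonneg (ae_of_all _ fun y => mul_nonneg (sq_nonneg _) (hρ y))
    (hg.const_mul _) (ae_of_all _ fun y => ?_)
  have hsq : F y s ^ 2 ≤ (g y / s) ^ 2 := by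
    rw [← sq_abs]
    exact pow_le_pow_left₀ (abs_nonneg _) (hF s hs y) 2
  calc F y s ^ 2 * ρ y ≤ (g y / s) ^ 2 * ρ y := mul_le_mul_of_nonneg_right hsq (hρ y)
    _ = (s ^ 2)⁻¹ * (g y ^ 2 * ρ y) := by ring

theorem potential_V_small_in_L2rho_general (N : ℕ) (p : ℝ) (hp : 1 < p)
    (κ : ℝ) (hκ : κ = (p-1) ^ (-(1:ℝ)/(p-1)))
    (φ : EuclideanSpace ℝ (Fin N) → ℝ → ℝ)
    (hφ : ∀ y s, φ y s =
      ((p-1) + ((p-1)^2/(4*p)) * ‖y‖^2 / s) ^ (-(1:ℝ)/(p-1)) + κ * N / (2*p*s))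
    (V : EuclideanSpace ℝ (Fin N) → ℝ → ℝ)
    (hV : ∀ y s, V y s = p * ((φ y s) ^ (p-1) - 1/(p-1)))
    (ρ : EuclideanSpace ℝ (Fin N) → ℝ)
    (hρ : ∀ y, ρ y = (4*Real.pi) ^ (-(N:ℝ)/2) * Real.exp (-‖y‖^2/4)) :
    (∃ C > (0:ℝ), ∀ s ≥ (1:ℝ), ∀ y, |V y s| ≤ C * (1 + ‖y‖^2) / s) ∧
    Filter.Tendsto (fun s => ∫ y, (V y s)^2 * ρ y) Filter.atTop (nhds 0) := by
  have hp0 : 0 < p := by linarith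
  obtain ⟨C, hC, hprofile⟩ := abs_rpow_profile_sub_le (q := p - 1) (a := (p - 1) ^ 2 / (4 * p))
    (B := κ * N / (2 * p)) (by linarith) (by positivity) (by rw [hκ]; positivity)
  have hbound : ∀ s ≥ (1:ℝ), ∀ y, |V y s| ≤ p * C * (1 + ‖y‖ ^ 2) / s := by
    intro s hs y
    have h := hprofile s hs (‖y‖ ^ 2) (by positivity)
    rw [div_div] at h
    calc |V y s| = p * |φ y s ^ (p - 1) - 1 / (p - 1)| := by rw [hV, abs_mul, abs_of_pos hp0]
      _ ≤ p * (C * (1 + ‖y‖ ^ 2) / s) := by rw [hφ]; gcongr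
      _ = p * C * (1 + ‖y‖ ^ 2) / s := by ring
  refine ⟨⟨p * C, by positivity, hbound⟩, tendsto_integral_sq_mul_of_abs_le_div
    (fun y => by rw [hρ]; positivity) ?_ hbound⟩
  refine (integrable_one_add_sq_norm_sq_mul_exp.const_mul
    ((p * C) ^ 2 * (4 * π) ^ (-(N:ℝ) / 2))).congr (ae_of_all _ fun y => ?_)
  simp only [hρ]
  ring

theorem potential_V_small_in_L2rho (N : ℕ) (hN : 1 ≤ N) (p : ℝ) (hp : 1 < p)
    (κ : ℝ) (hκ : κ = (p-1) ^ (-(1:ℝ)/(p-1)))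
    (φ : EuclideanSpace ℝ (Fin N) → ℝ → ℝ)
    (hφ : ∀ y s, φ y s =
      ((p-1) + ((p-1)^2/(4*p)) * ‖y‖^2 / s) ^ (-(1:ℝ)/(p-1)) + κ * N / (2*p*s))
    (V : EuclideanSpace ℝ (Fin N) → ℝ → ℝ)
    (hV : ∀ y s, V y s = p * ((φ y s) ^ (p-1) - 1/(p-1)))
    (ρ : EuclideanSpace ℝ (Fin N) → ℝ)
    (hρ : ∀ y, ρ y = (4*Real.pi) ^ (-(N:ℝ)/2) * Real.exp (-‖y‖^2/4)) :
    (∃ C > (0:ℝ), ∀ s ≥ (1:ℝ), ∀ y, |V y s| ≤ C * (1 + ‖y‖^2) / s) ∧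
    Filter.Tendsto (fun s => ∫ y, (V y s)^2 * ρ y) Filter.atTop (nhds 0) :=
  potential_V_small_in_L2rho_general N p hp κ hκ φ hφ V hV ρ hρ
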